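/- Let n > 1 and let (a_j)_{j∈ℕ} be a tame sequence of points in ℂⁿ. Then for every bijection σ : ℕ → ℕ the reordered sequence (a_{σ(j)})_{j∈ℕ} is also tame; i.e., tameness of a discrete sequence of distinct points does not depend on the ordering of the points. -/

import Mathlib

open scoped Topology
open Asymptotics Set Filter

noncomputable section

/-- The complex Euclidean space `ℂⁿ`. -/
abbrev Cn (n : ℕ) := EuclideanSpace ℂ (Fin n)

/-- A map is holomorphic on a subset `S` of a complex normed space if near every point of `S`
it agrees on `S` with a map holomorphic on an open neighborhood of that point. -/
def HoloOn {E F : Type} [NormedAddCommGroup E] [NormedSpace ℂ E]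
    [NormedAddCommGroup F] [NormedSpace ℂ F] (S : Set E) (f : E → F) : Prop :=
  ∀ p ∈ S, ∃ U : Set E, IsOpen U ∧ p ∈ U ∧ ∃ g : E → F,
    DifferentiableOn ℂ g U ∧ EqOn f g (S ∩ U)

/-- `X ⊆ ℂ^N` is a closed analytic subset: it is closed and locally cut out by finitely many
holomorphic functions.  By the embedding theorem this is a model for a finite dimensional
reduced Stein space. -/
def IsClosedAnalyticSubset {N : ℕ} (X : Set (Cn N)) : Prop :=
  IsClosed X ∧ ∀ p ∈ X, ∃ U : Set (Cn N), IsOpen U ∧ p ∈ U ∧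
    ∃ (m : ℕ) (g : Fin m → Cn N → ℂ), (∀ i, DifferentiableOn ℂ (g i) U) ∧
      X ∩ U = {z ∈ U | ∀ i, g i z = 0}

/-- `X ⊆ ℂ^N` is a closed complex submanifold of `ℂ^N` (locally biholomorphically
straightened to a coordinate subspace).  By the embedding theorem this is a model for a
Stein manifold. -/
def IsSteinSubmanifold {N : ℕ} (X : Set (Cn N)) : Prop :=
  IsClosed X ∧ ∀ p ∈ X, ∃ (d : ℕ) (U : Set (Cn N)) (φ ψ : Cn N → Cn N),
    IsOpen U ∧ p ∈ U ∧ DifferentiableOn ℂ φ U ∧ IsOpen (φ '' U) ∧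
    DifferentiableOn ℂ ψ (φ '' U) ∧ (∀ z ∈ U, ψ (φ z) = z) ∧
    X ∩ U = {z ∈ U | ∀ i : Fin N, d ≤ (i : ℕ) → φ z i = 0}

/-- `f` is a holomorphic automorphism of `ℂⁿ`. -/
def IsAutCn {n : ℕ} (f : Cn n → Cn n) : Prop :=
  Function.Bijective f ∧ Differentiable ℂ f ∧
    ∃ g : Cn n → Cn n, Differentiable ℂ g ∧
      Function.LeftInverse g f ∧ Function.RightInverse g f

/-- The complex Jacobian matrix of `f` at `z`. -/
def jacMatrix {n : ℕ} (f : Cn n → Cn n) (z : Cn n) : Matrix (Fin n) (Fin n) ℂ :=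
  fun i j => fderiv ℂ f z (EuclideanSpace.single j 1) i

/-- The complex Jacobian determinant of `f` at `z`. -/
def jacDet {n : ℕ} (f : Cn n → Cn n) (z : Cn n) : ℂ :=
  (jacMatrix f z).det

/-- A map `ℂⁿ → ℂⁿ` is volume preserving if its Jacobian determinant is `1` everywhere. -/
def VolumePreserving {n : ℕ} (f : Cn n → Cn n) : Prop :=
  ∀ z, jacDet f z = 1

/-- `f : ℂⁿ → ℂⁿ` is a polynomial map of (total) degree at most `k`. -/
def IsPolyMapDegLe (n k : ℕ) (f : Cn n → Cn n) : Prop :=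
  ∃ p : Fin n → MvPolynomial (Fin n) ℂ, (∀ i, (p i).totalDegree ≤ k) ∧
    ∀ z : Cn n, ∀ i : Fin n, f z i = MvPolynomial.eval (fun j => z j) (p i)

/-- `P` is a holomorphic family, parametrized by `X ⊆ ℂ^N`, of nondegenerate `k`-jets at
`p ∈ ℂⁿ` sending `p` to `q`, i.e. of elements of `J^k_{p,q}(ℂⁿ)`. -/
def IsHolJetFamily {N : ℕ} (X : Set (Cn N)) {n : ℕ} (k : ℕ) (p q : Cn n)
    (P : Cn N → Cn n → Cn n) : Prop :=
  HoloOn (X ×ˢ (univ : Set (Cn n))) (fun w : Cn N × Cn n => P w.1 w.2) ∧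
  (∀ x ∈ X, IsPolyMapDegLe n k (P x)) ∧
  (∀ x ∈ X, P x p = q) ∧
  (∀ x ∈ X, (jacMatrix (P x) p).det ≠ 0)

/-- `F` is a holomorphic family, parametrized by `X`, of holomorphic automorphisms of `ℂⁿ`,
i.e. a holomorphic map `X → Aut(ℂⁿ)`. -/
def IsHolFamilyAut {N n : ℕ} (X : Set (Cn N)) (F : Cn N → Cn n → Cn n) : Prop :=
  (∀ x ∈ X, IsAutCn (F x)) ∧
  HoloOn (X ×ˢ (univ : Set (Cn n))) (fun w : Cn N × Cn n => F w.1 w.2)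

/-- The family `F : X → Aut(ℂⁿ)` is nullhomotopic: it is homotopic, through families of
holomorphic automorphisms, to a constant family. -/
def NullhomotopicFamilyAut {N n : ℕ} (X : Set (Cn N)) (F : Cn N → Cn n → Cn n) : Prop :=
  ∃ H : ℝ → Cn N → Cn n → Cn n,
    ContinuousOn (fun w : ℝ × Cn N × Cn n => H w.1 w.2.1 w.2.2)
      (Icc (0 : ℝ) 1 ×ˢ X ×ˢ (univ : Set (Cn n))) ∧
    (∀ t ∈ Icc (0 : ℝ) 1, ∀ x ∈ X, IsAutCn (H t x)) ∧
    (∀ x ∈ X, H 1 x = F x) ∧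
    (∃ f₀, ∀ x ∈ X, H 0 x = f₀)

/-- A matrix-valued map on `X` is nullhomotopic as a map into `GLₙ(ℂ)`: it is homotopic,
through maps with invertible values, to a constant map. -/
def NullhomotopicToGL {N n : ℕ} (X : Set (Cn N)) (Q : Cn N → Matrix (Fin n) (Fin n) ℂ) : Prop :=
  ∃ H : ℝ → Cn N → Matrix (Fin n) (Fin n) ℂ,
    (∀ i j, ContinuousOn (fun w : ℝ × Cn N => H w.1 w.2 i j) (Icc (0 : ℝ) 1 ×ˢ X)) ∧
    (∀ t ∈ Icc (0 : ℝ) 1, ∀ x ∈ X, (H t x).det ≠ 0) ∧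
    (∀ x ∈ X, H 1 x = Q x) ∧
    (∃ A, ∀ x ∈ X, H 0 x = A)

/-- The point `(c, 0, …, 0) ∈ ℂⁿ`. -/
def axisPt (n : ℕ) (c : ℂ) : Cn n :=
  WithLp.toLp 2 (fun i : Fin n => if (i : ℕ) = 0 then c else 0)

/-- A sequence in `ℂⁿ` is tame if some holomorphic automorphism takes it to the sequence
`(j, 0, …, 0)`, `j = 1, 2, …`. -/
def TameSeq {n : ℕ} (a : ℕ → Cn n) : Prop :=
  ∃ F : Cn n → Cn n, IsAutCn F ∧ ∀ j : ℕ, F (a j) = axisPt n ((j : ℂ) + 1)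

/-- A sequence in `ℂⁿ` is very tame if some volume preserving holomorphic automorphism takes
it to the sequence `(j, 0, …, 0)`, `j = 1, 2, …`. -/
def VeryTameSeq {n : ℕ} (a : ℕ → Cn n) : Prop :=
  ∃ F : Cn n → Cn n, IsAutCn F ∧ VolumePreserving F ∧
    ∀ j : ℕ, F (a j) = axisPt n ((j : ℂ) + 1)


/-!
Composing with a normalising automorphism of `(aⱼ)`, it suffices to find, for a bijection `e`
of `ℕ`, an automorphism of `ℂⁿ` sending `(e j + 1, 0, …, 0)` to `(j + 1, 0, …, 0)`. In the
first two coordinates the shear `(x, y) ↦ (x, y + g₁ x)` lifts this point to height `j - e j`,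
the shear `(x, y) ↦ (x + y, y)` slides it to `(j + 1, j - e j)`, and `(x, y) ↦ (x, y + g₂ x)`
brings it back to the axis. The entire functions `g₁`, `g₂` with prescribed values at the
positive integers are series of translates of `sin (π z) / (π z)`, damped by exponential
factors so that the series converge locally uniformly.
-/

namespace Complex

lemma norm_sin_le_exp_abs_im (w : ℂ) : ‖sin w‖ ≤ Real.exp |w.im| := by
  have h₁ : ‖exp (-w * I)‖ ≤ Real.exp |w.im| := by
    rw [norm_exp]; gcongr; simpa using le_abs_self w.im
  have h₂ : ‖exp (w * I)‖ ≤ Real.exp |w.im| := by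
    rw [norm_exp]; gcongr; simpa using neg_le_abs w.im
  calc ‖sin w‖ = ‖exp (-w * I) - exp (w * I)‖ / 2 := by
        rw [sin, norm_div, norm_mul, norm_I, mul_one, Complex.norm_two]
    _ ≤ (‖exp (-w * I)‖ + ‖exp (w * I)‖) / 2 := by gcongr; exact norm_sub_le _ _
    _ ≤ Real.exp |w.im| := by linarith

def sinc : ℂ → ℂ := dslope sin 0

lemma sinc_zero : sinc 0 = 1 := by
  simp [sinc]

lemma sinc_of_ne_zero {w : ℂ} (hw : w ≠ 0) : sinc w = sin w / w := by
  rw [sinc, dslope_of_ne _ hw, slope_def_field, sin_zero, sub_zero, sub_zero]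

lemma differentiable_sinc : Differentiable ℂ sinc :=
  differentiableOn_univ.mp <|
    (differentiableOn_dslope Filter.univ_mem).mpr differentiable_sin.differentiableOn

lemma sinc_pi_mul_intCast {k : ℤ} (hk : k ≠ 0) : sinc (Real.pi * k) = 0 := by
  rw [sinc_of_ne_zero (mul_ne_zero (ofReal_ne_zero.mpr Real.pi_ne_zero) (Int.cast_ne_zero.mpr hk)),
    mul_comm, sin_int_mul_pi, zero_div]

lemma norm_sinc_le {w : ℂ} (hw : 1 ≤ ‖w‖) : ‖sinc w‖ ≤ Real.exp |w.im| := by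
  rw [sinc_of_ne_zero (norm_pos_iff.mp (one_pos.trans_le hw)), norm_div]
  exact div_le_of_le_mul₀ (norm_nonneg _) (Real.exp_pos _).le
    ((norm_sin_le_exp_abs_im w).trans (le_mul_of_one_le_right (Real.exp_pos _).le hw))

end Complex

section Interpolation

open Complex Metric

/-- On `re z ≤ (j + 1) / 2` the factor `exp (interpRate v j * (z - (j + 1)))` is at most
`exp (-(‖v j‖ + j))`, which absorbs `v j` and leaves a summable `exp (-j)`. -/
def interpRate (v : ℕ → ℂ) (j : ℕ) : ℝ := 2 * (‖v j‖ + j) / (j + 1)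

def interpTerm (v : ℕ → ℂ) (j : ℕ) (z : ℂ) : ℂ :=
  v j * exp (interpRate v j * (z - (j + 1))) * sinc (Real.pi * (z - (j + 1)))

lemma differentiable_interpTerm (v : ℕ → ℂ) (j : ℕ) : Differentiable ℂ (interpTerm v j) :=
  ((differentiable_exp.comp ((differentiable_id.sub_const _).const_mul _)).const_mul _).mul
    (differentiable_sinc.comp ((differentiable_id.sub_const _).const_mul _))

lemma interpTerm_self (v : ℕ → ℂ) (j : ℕ) : interpTerm v j (j + 1) = v j := by
  simp [interpTerm, sinc_zero]

lemma interpTerm_of_ne (v : ℕ → ℂ) {i j : ℕ} (hij : i ≠ j) : interpTerm v j (i + 1) = 0 := by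
  have hk : ((i : ℤ) - j : ℤ) ≠ 0 := sub_ne_zero.mpr (Nat.cast_injective.ne hij)
  have h := sinc_pi_mul_intCast hk
  push_cast at h
  simp [interpTerm, add_sub_add_right_eq_sub, h]

lemma norm_mul_exp_interpRate_le (v : ℕ → ℂ) (j : ℕ) {z : ℂ} (hz : 2 * z.re ≤ j + 1) :
    ‖v j‖ * ‖exp (interpRate v j * (z - (j + 1)))‖ ≤ Real.exp (-j) := by
  have hre : (interpRate v j * (z - (j + 1)) : ℂ).re ≤ -(‖v j‖ + j) := by
    have hrate : interpRate v j * (j + 1) = 2 * (‖v j‖ + j) := by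
      rw [interpRate]; field_simp
    have hrate₀ : 0 ≤ interpRate v j := by rw [interpRate]; positivity
    simp only [mul_re, ofReal_re, ofReal_im, sub_re, add_re, natCast_re, one_re, zero_mul,
      sub_zero]
    nlinarith
  calc ‖v j‖ * ‖exp (interpRate v j * (z - (j + 1)))‖
      ≤ Real.exp ‖v j‖ * Real.exp (-(‖v j‖ + j)) := by
        rw [norm_exp]
        gcongr
        linarith [Real.add_one_le_exp ‖v j‖]
    _ = Real.exp (-j) := by rw [← Real.exp_add]; ring_nf

lemma norm_interpTerm_le (v : ℕ → ℂ) {R : ℝ} (hR : 1 ≤ R) {j : ℕ} (hj : 2 * R ≤ j + 1) {z : ℂ}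
    (hz : ‖z‖ ≤ R) : ‖interpTerm v j z‖ ≤ Real.exp (-j) * Real.exp (Real.pi * R) := by
  have hsinc : ‖sinc (Real.pi * (z - (j + 1)))‖ ≤ Real.exp (Real.pi * R) := by
    have hdist : R ≤ ‖z - (j + 1)‖ := by
      have := norm_sub_norm_le ((j : ℂ) + 1) z
      rw [norm_sub_rev] at this
      have hc : ‖(j : ℂ) + 1‖ = j + 1 := by exact_mod_cast Complex.norm_natCast (j + 1)
      linarith
    refine (norm_sinc_le ?_).trans (Real.exp_le_exp.mpr ?_)
    · rw [norm_mul, norm_real, Real.norm_of_nonneg Real.pi_pos.le]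
      nlinarith [Real.pi_gt_three]
    · simp only [mul_im, ofReal_re, ofReal_im, sub_im, add_im, natCast_im, one_im, zero_mul,
        add_zero, sub_zero, abs_mul, abs_of_pos Real.pi_pos]
      gcongr
      exact (abs_im_le_norm z).trans hz
  rw [interpTerm, norm_mul, norm_mul]
  gcongr
  exact norm_mul_exp_interpRate_le v j (by linarith [(re_le_norm z).trans hz])

lemma differentiableOn_tsum_of_summable_norm_nat_add {T : ℕ → ℂ → ℂ} {U : Set ℂ} {u : ℕ → ℝ}
    (N : ℕ) (hu : Summable u) (hT : ∀ j, DifferentiableOn ℂ (T j) U) (hU : IsOpen U)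
    (hle : ∀ j, ∀ z ∈ U, ‖T (j + N) z‖ ≤ u j) :
    DifferentiableOn ℂ (fun z => ∑' j, T j z) U := by
  have hhead : DifferentiableOn ℂ (fun z => ∑ j ∈ Finset.range N, T j z) U :=
    DifferentiableOn.fun_sum fun j _ => hT j
  have htail := differentiableOn_tsum_of_summable_norm hu (fun j => hT (j + N)) hU hle
  refine (hhead.add htail).congr fun z hz => ?_
  have hsum : Summable fun j => T j z :=
    (summable_nat_add_iff N).mp (hu.of_norm_bounded fun j => hle j z hz)
  exact (hsum.sum_add_tsum_nat_add N).symm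

theorem exists_differentiable_eq_on_nat_succ (v : ℕ → ℂ) :
    ∃ f : ℂ → ℂ, Differentiable ℂ f ∧ ∀ j : ℕ, f (j + 1) = v j := by
  refine ⟨fun z => ∑' j, interpTerm v j z, fun z₀ => ?_, fun i => ?_⟩
  · set R := ‖z₀‖ + 1
    set N := ⌈2 * R⌉₊
    have hsum : Summable fun j : ℕ => Real.exp (-j) * Real.exp (Real.pi * R) :=
      Real.summable_exp_neg_nat.mul_right _
    have hdiff : DifferentiableOn ℂ (fun z => ∑' j, interpTerm v j z) (ball 0 R) := by
      refine differentiableOn_tsum_of_summable_norm_nat_add N hsum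
        (fun j => (differentiable_interpTerm v j).differentiableOn) isOpen_ball fun j z hz => ?_
      have hN : 2 * R ≤ ((j + N : ℕ) : ℝ) + 1 := by
        have := Nat.le_ceil (2 * R)
        push_cast
        linarith [(j.cast_nonneg : (0 : ℝ) ≤ j)]
      refine (norm_interpTerm_le v (by linarith [norm_nonneg z₀]) hN
        (mem_ball_zero_iff.mp hz).le).trans ?_
      gcongr
      simp
    exact hdiff.differentiableAt (isOpen_ball.mem_nhds (by simp [R]))
  · exact (tsum_eq_single i fun j hj => interpTerm_of_ne v (Ne.symm hj)).trans
      (interpTerm_self v i)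

end Interpolation

lemma IsAutCn.of_inverse {n : ℕ} {f g : Cn n → Cn n} (hf : Differentiable ℂ f)
    (hg : Differentiable ℂ g) (hl : Function.LeftInverse g f) (hr : Function.RightInverse g f) :
    IsAutCn f :=
  ⟨⟨hl.injective, hr.surjective⟩, hf, g, hg, hl, hr⟩

lemma IsAutCn.comp {n : ℕ} {f g : Cn n → Cn n} (hg : IsAutCn g) (hf : IsAutCn f) :
    IsAutCn (g ∘ f) := by
  obtain ⟨-, hgd, g', hg'd, hgl, hgr⟩ := hg
  obtain ⟨-, hfd, f', hf'd, hfl, hfr⟩ := hf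
  exact .of_inverse (hgd.comp hfd) (hf'd.comp hg'd) (hgl.comp hfl) (hgr.comp hfr)

section Shear

variable {n : ℕ} {i j : Fin n}

def shear (i j : Fin n) (f : ℂ → ℂ) (z : Cn n) : Cn n :=
  z + f (z i) • EuclideanSpace.single j 1

lemma differentiable_shear {f : ℂ → ℂ} (hf : Differentiable ℂ f) :
    Differentiable ℂ (shear i j f) :=
  differentiable_id.add <|
    (hf.comp (EuclideanSpace.proj i : Cn n →L[ℂ] ℂ).differentiable).smul_const _

lemma shear_apply_of_ne (hij : i ≠ j) (f : ℂ → ℂ) (z : Cn n) : shear i j f z i = z i := by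
  simp [shear, hij]

lemma shear_neg_shear (hij : i ≠ j) (f : ℂ → ℂ) (z : Cn n) :
    shear i j (-f) (shear i j f z) = z := by
  rw [shear, shear_apply_of_ne hij, shear]
  simp

lemma shear_shear_neg (hij : i ≠ j) (f : ℂ → ℂ) (z : Cn n) :
    shear i j f (shear i j (-f) z) = z := by
  simpa using shear_neg_shear hij (-f) z

lemma isAutCn_shear (hij : i ≠ j) {f : ℂ → ℂ} (hf : Differentiable ℂ f) :
    IsAutCn (shear i j f) :=
  .of_inverse (differentiable_shear hf) (differentiable_shear hf.neg) (shear_neg_shear hij f)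
    (shear_shear_neg hij f)

end Shear

section Plane

variable {m : ℕ}

def planePt (m : ℕ) (x y : ℂ) : Cn (m + 2) :=
  x • EuclideanSpace.single 0 1 + y • EuclideanSpace.single 1 1

lemma axisPt_eq_planePt (x : ℂ) : axisPt (m + 2) x = planePt m x 0 := by
  ext k
  by_cases hk : k = 0 <;> simp [axisPt, planePt, hk]

@[simp] lemma planePt_apply_zero (x y : ℂ) : planePt m x y 0 = x := by
  simp [planePt]

@[simp] lemma planePt_apply_one (x y : ℂ) : planePt m x y 1 = y := by
  simp [planePt]

lemma shear_zero_one_planePt (f : ℂ → ℂ) (x y : ℂ) :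
    shear 0 1 f (planePt m x y) = planePt m x (y + f x) := by
  rw [shear, planePt_apply_zero, planePt, planePt, add_smul]
  abel

lemma shear_one_zero_planePt (f : ℂ → ℂ) (x y : ℂ) :
    shear 1 0 f (planePt m x y) = planePt m (x + f y) y := by
  rw [shear, planePt_apply_one, planePt, planePt, add_smul]
  abel

end Plane

theorem exists_isAutCn_axisPt_perm (m : ℕ) (e : ℕ ≃ ℕ) :
    ∃ G : Cn (m + 2) → Cn (m + 2), IsAutCn G ∧
      ∀ j : ℕ, G (axisPt (m + 2) ((e j : ℂ) + 1)) = axisPt (m + 2) ((j : ℂ) + 1) := by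
  obtain ⟨g₁, hg₁, hg₁e⟩ := exists_differentiable_eq_on_nat_succ fun k => (e.symm k : ℂ) - k
  obtain ⟨g₂, hg₂, hg₂e⟩ := exists_differentiable_eq_on_nat_succ fun j => (e j : ℂ) - j
  have h01 : (0 : Fin (m + 2)) ≠ 1 := by simp
  refine ⟨shear 0 1 g₂ ∘ shear 1 0 id ∘ shear 0 1 g₁,
    (isAutCn_shear h01 hg₂).comp ((isAutCn_shear h01.symm differentiable_id).comp
      (isAutCn_shear h01 hg₁)), fun j => ?_⟩
  have hx : (e j : ℂ) + 1 + (0 + (j - e j)) = j + 1 := by ring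
  simp only [axisPt_eq_planePt, Function.comp_apply, shear_zero_one_planePt,
    shear_one_zero_planePt, hg₁e, e.symm_apply_apply, id, hx, hg₂e]
  congr 1
  ring

/-- tameness of a sequence does not depend on the ordering of its points:
if `(a_j)` is tame and `σ : ℕ → ℕ` is a bijection, then `(a_{σ(j)})` is tame. -/
theorem tame_invariant_under_reordering
    {n : ℕ} (hn : 1 < n) (a : ℕ → Cn n) (σ : ℕ → ℕ) (hσ : Function.Bijective σ)
    (ha : TameSeq a) :
    TameSeq fun j => a (σ j) := by
  obtain ⟨m, rfl⟩ : ∃ m, n = m + 2 := ⟨n - 2, by omega⟩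
  obtain ⟨F, hF, hFa⟩ := ha
  obtain ⟨G, hG, hGe⟩ := exists_isAutCn_axisPt_perm m (Equiv.ofBijective σ hσ)
  refine ⟨G ∘ F, hG.comp hF, fun j => ?_⟩
  rw [Function.comp_apply, hFa]
  exact hGe j

end
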